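/- Let S ⊆ ℝ^d be a nonempty compact convex set, f : S → ℝ continuous, and x₀ ∈ S. Then there exists a finite family of points x^λ ∈ S and weights p(λ) ≥ 0 with ∑_λ p(λ) = 1 and ∑_λ p(λ)·x^λ = x₀, consisting of at most d+1 elements, which achieves f⋆(x₀): ∑_λ p(λ)·f(x^λ) = f⋆(x₀). In particular the infimum defining f⋆(x₀) is attained. -/

import Mathlib

/-! The values `∑ p(λ) f(xλ)` of the decompositions of `x₀` are the heights of points of the
convex hull `K` of the graph of `f` lying over `x₀`, so `f⋆(x₀)` is the height of the lowest point
of `K` over `x₀`, which exists because `K` is compact. That lowest point is not interior to `K`, so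
its Carathéodory decomposition cannot use `d + 2` affinely independent points of the graph (they
would span a full-dimensional simplex containing it in its interior); it uses at most `d + 1`. -/

noncomputable section

/-- The convex-roof value `f⋆(x₀)`: the infimum of `∑ p(λ) f(xλ)` over finite
convex decompositions `∑ p(λ) xλ = x₀` with all `xλ ∈ S`. -/
def fstar {d : ℕ} (S : Set (Fin d → ℝ)) (f : (Fin d → ℝ) → ℝ)
    (x₀ : Fin d → ℝ) : ℝ :=
  sInf {y | ∃ (m : ℕ) (xs : Fin m → Fin d → ℝ) (pr : Fin m → ℝ),
    (∀ i, 0 ≤ pr i) ∧ (∑ i, pr i) = 1 ∧ (∀ i, xs i ∈ S) ∧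
    (∑ i, pr i • xs i) = x₀ ∧ y = ∑ i, pr i * f (xs i)}

open Set Finset Module Filter Topology

theorem exists_fin_affineIndependent_of_mem_convexHull {E : Type*} [AddCommGroup E] [Module ℝ E]
    [FiniteDimensional ℝ E] {s : Set E} {x : E} (hx : x ∈ convexHull ℝ s) :
    ∃ (m : ℕ) (z : Fin m → E) (w : Fin m → ℝ), m ≤ finrank ℝ E + 1 ∧ Set.range z ⊆ s ∧
      AffineIndependent ℝ z ∧ (∀ i, 0 < w i) ∧ ∑ i, w i = 1 ∧ ∑ i, w i • z i = x := by
  obtain ⟨ι, _, z, w, hzs, hz, hw₀, hw₁, hwz⟩ := eq_pos_convex_span_of_mem_convexHull hx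
  set e := (Fintype.equivFin ι).symm
  refine ⟨_, z ∘ e, w ∘ e, ?_, ?_, hz.comp_embedding e.toEmbedding, fun i ↦ hw₀ (e i), ?_, ?_⟩
  · exact hz.card_le_finrank_succ.trans (Nat.succ_le_succ (Submodule.finrank_le _))
  · exact (range_comp_subset_range e z).trans hzs
  · rw [← hw₁]; exact e.sum_comp w
  · rw [← hwz]; exact e.sum_comp fun i ↦ w i • z i

section Normed

variable {E : Type*} [NormedAddCommGroup E] [NormedSpace ℝ E]

theorem AffineIndependent.sum_smul_mem_interior_convexHull [FiniteDimensional ℝ E]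
    {ι : Type*} [Fintype ι] {z : ι → E} (hz : AffineIndependent ℝ z)
    (hcard : Fintype.card ι = finrank ℝ E + 1) {w : ι → ℝ} (hw₀ : ∀ i, 0 < w i)
    (hw₁ : ∑ i, w i = 1) : ∑ i, w i • z i ∈ interior (convexHull ℝ (range z)) := by
  let b : AffineBasis ι ℝ E := ⟨z, hz, hz.affineSpan_eq_top_iff_card_eq_finrank_add_one.mpr hcard⟩
  have hcomb : ∑ i, w i • z i = Finset.univ.affineCombination ℝ b w :=
    (Finset.univ.affineCombination_eq_linear_combination z w hw₁).symm
  change _ ∈ interior (convexHull ℝ (range b))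
  rw [b.interior_convexHull, hcomb]
  intro i
  rw [b.coord_apply_combination_of_mem (Finset.mem_univ i) hw₁]
  exact hw₀ i

theorem exists_fin_convexCombination_card_le_finrank_of_notMem_interior [FiniteDimensional ℝ E]
    {s : Set E} {x : E} (hx : x ∈ convexHull ℝ s) (hx' : x ∉ interior (convexHull ℝ s)) :
    ∃ (m : ℕ) (z : Fin m → E) (w : Fin m → ℝ), m ≤ finrank ℝ E ∧ Set.range z ⊆ s ∧
      (∀ i, 0 < w i) ∧ ∑ i, w i = 1 ∧ ∑ i, w i • z i = x := by
  obtain ⟨m, z, w, hm, hzs, hz, hw₀, hw₁, rfl⟩ := exists_fin_affineIndependent_of_mem_convexHull hx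
  refine ⟨m, z, w, ?_, hzs, hw₀, hw₁, rfl⟩
  refine Nat.le_of_lt_succ (hm.lt_of_ne fun hm ↦ hx' ?_)
  exact interior_mono (convexHull_mono hzs)
    (hz.sum_smul_mem_interior_convexHull (by simpa using hm) hw₀ hw₁)

theorem IsCompact.convexHull [FiniteDimensional ℝ E] {s : Set E} (hs : IsCompact s) :
    IsCompact (convexHull ℝ s) := by
  have hunion : _root_.convexHull ℝ s = ⋃ m ∈ Finset.range (finrank ℝ E + 2),
      (fun p : (Fin m → ℝ) × (Fin m → E) ↦ ∑ i, p.1 i • p.2 i) ''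
        (stdSimplex ℝ (Fin m) ×ˢ univ.pi fun _ ↦ s) := by
    refine Subset.antisymm (fun x hx ↦ ?_) (iUnion₂_subset fun m _ ↦ ?_)
    · obtain ⟨m, z, w, hm, hzs, -, hw₀, hw₁, rfl⟩ :=
        exists_fin_affineIndependent_of_mem_convexHull hx
      refine mem_biUnion (Finset.mem_range.mpr (Nat.lt_succ_of_le hm)) ⟨(w, z), ?_, rfl⟩
      exact ⟨⟨fun i ↦ (hw₀ i).le, hw₁⟩, fun i _ ↦ hzs (mem_range_self i)⟩
    · rintro _ ⟨⟨w, z⟩, ⟨⟨hw₀, hw₁⟩, hz⟩, rfl⟩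
      exact (convex_convexHull ℝ s).sum_mem (fun i _ ↦ hw₀ i) hw₁
        fun i _ ↦ subset_convexHull ℝ s (hz i (mem_univ i))
  rw [hunion]
  refine (Finset.range _).isCompact_biUnion fun m _ ↦ ?_
  refine ((isCompact_stdSimplex ℝ _).prod (isCompact_univ_pi fun _ ↦ hs)).image ?_
  fun_prop

end Normed

theorem notMem_interior_of_isMinOn_snd {E : Type*} [TopologicalSpace E] {K : Set (E × ℝ)}
    {p : E × ℝ} (hp : IsMinOn Prod.snd (K ∩ {q | q.1 = p.1}) p) : p ∉ interior K := by
  intro hint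
  have hlim : Tendsto (fun t : ℝ ↦ (p.1, p.2 - t)) (𝓝[>] 0) (𝓝 p) := by
    refine tendsto_nhdsWithin_of_tendsto_nhds ?_
    simpa using ((continuous_const.prodMk (continuous_const.sub continuous_id)).tendsto (0 : ℝ))
  obtain ⟨t, htK, ht : 0 < t⟩ := ((hlim.eventually (mem_interior_iff_mem_nhds.mp hint)).and
    self_mem_nhdsWithin).exists
  have : p.2 ≤ p.2 - t := hp ⟨htK, rfl⟩
  linarith

theorem sum_smul_prodMk {ι E : Type*} [Fintype ι] [AddCommMonoid E] [Module ℝ E]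
    (w : ι → ℝ) (x : ι → E) (y : ι → ℝ) :
    ∑ i, w i • (x i, y i) = (∑ i, w i • x i, ∑ i, w i * y i) := by
  ext <;> simp [Prod.fst_sum, Prod.snd_sum]

theorem prodMk_sum_mem_convexHull_graphOn {ι E : Type*} [Fintype ι] [AddCommGroup E]
    [Module ℝ E] {S : Set E} {f : E → ℝ} {x : ι → E} {w : ι → ℝ} (hw₀ : ∀ i, 0 ≤ w i)
    (hw₁ : ∑ i, w i = 1) (hx : ∀ i, x i ∈ S) :
    (∑ i, w i • x i, ∑ i, w i * f (x i)) ∈ convexHull ℝ (S.graphOn f) := by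
  rw [← sum_smul_prodMk]
  exact (convex_convexHull ℝ _).sum_mem (fun i _ ↦ hw₀ i) hw₁
    fun i _ ↦ subset_convexHull ℝ _ (mem_image_of_mem _ (hx i))

theorem fstar_eq_of_forall_mem_convexHull_graphOn {d m : ℕ} {S : Set (Fin d → ℝ)}
    {f : (Fin d → ℝ) → ℝ} {x₀ : Fin d → ℝ} {xs : Fin m → Fin d → ℝ} {pr : Fin m → ℝ}
    (hpr₀ : ∀ i, 0 ≤ pr i) (hpr₁ : ∑ i, pr i = 1) (hxs : ∀ i, xs i ∈ S)
    (hx₀ : ∑ i, pr i • xs i = x₀)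
    (hmin : ∀ t, (x₀, t) ∈ convexHull ℝ (S.graphOn f) → ∑ i, pr i * f (xs i) ≤ t) :
    fstar S f x₀ = ∑ i, pr i * f (xs i) := by
  refine IsLeast.csInf_eq ⟨⟨m, xs, pr, hpr₀, hpr₁, hxs, hx₀, rfl⟩, ?_⟩
  rintro _ ⟨n, ys, q, hq₀, hq₁, hys, rfl, rfl⟩
  exact hmin _ (prodMk_sum_mem_convexHull_graphOn hq₀ hq₁ hys)

theorem fstar_attained_small_support {d : ℕ} (S : Set (Fin d → ℝ))
    (f : (Fin d → ℝ) → ℝ) (hScomp : IsCompact S)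
    (hf : ContinuousOn f S)
    (x₀ : Fin d → ℝ) (hx₀ : x₀ ∈ S) :
    ∃ (m : ℕ) (xs : Fin m → Fin d → ℝ) (pr : Fin m → ℝ),
      m ≤ d + 1 ∧ (∀ i, 0 ≤ pr i) ∧ (∑ i, pr i) = 1 ∧ (∀ i, xs i ∈ S) ∧
      (∑ i, pr i • xs i) = x₀ ∧ (∑ i, pr i * f (xs i)) = fstar S f x₀ := by
  set K := convexHull ℝ (S.graphOn f)
  have hK : IsCompact K := (hScomp.image_of_continuousOn (continuousOn_id.prodMk hf)).convexHull
  have hfiber : IsCompact (K ∩ {q | q.1 = x₀}) :=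
    hK.inter_right (isClosed_eq continuous_fst continuous_const)
  obtain ⟨p, ⟨hpK, hp₁ : p.1 = x₀⟩, hpmin⟩ := hfiber.exists_isMinOn
    ⟨(x₀, f x₀), subset_convexHull ℝ _ ⟨x₀, hx₀, rfl⟩, rfl⟩ continuous_snd.continuousOn
  obtain ⟨m, z, w, hm, hzG, hw₀, hw₁, hwz⟩ :=
    exists_fin_convexCombination_card_le_finrank_of_notMem_interior hpK
      (notMem_interior_of_isMinOn_snd (hp₁ ▸ hpmin))
  have hz : ∀ i, (z i).1 ∈ S ∧ f (z i).1 = (z i).2 := fun i ↦ mem_graphOn.mp (hzG (mem_range_self i))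
  have hp : (∑ i, w i • (z i).1, ∑ i, w i * f (z i).1) = p := by
    simp_rw [← sum_smul_prodMk, (hz _).2]
    exact hwz
  have hx₀' : ∑ i, w i • (z i).1 = x₀ := by rw [← hp₁, ← hp]
  have hfstar := fstar_eq_of_forall_mem_convexHull_graphOn (fun i ↦ (hw₀ i).le) hw₁
    (fun i ↦ (hz i).1) hx₀' fun t ht ↦ (congrArg Prod.snd hp).trans_le (hpmin ⟨ht, rfl⟩)
  exact ⟨m, fun i ↦ (z i).1, w, by simpa using hm, fun i ↦ (hw₀ i).le, hw₁, fun i ↦ (hz i).1,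
    hx₀', hfstar.symm⟩

end
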